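/- arXiv:0804.3215 — 5 statements merged into one kernel-verified Lean document; each statement's English description precedes it below -/
import Mathlib

section
/- Let q_{l,N}(k) denote the probability that the largest gap among the l+1 gaps determined by a uniformly random (l+1)-subset of an N-node ring has length k. Then q_{0,N}(k) = [k = N] and q_{N-1,N}(k) = [k = 1], and for 1 ≤ l ≤ N-2 the recursion q_{l,N}(k) = p_{l,N}(k)·Σ_{m=1}^{k} q_{l-1,N-k}(m) + Σ_{m=1}^{k-1} p_{l,N}(m)·q_{l-1,N-m}(k) holds, where p_{l,N}(k) = C(N-k-1, l-1)/C(N-1, l). -/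
noncomputable section

/-- The node reached from `x` by moving `d` segments clockwise on an `N`-node ring. -/
def wrap {N : ℕ} (x : Fin N) (d : ℕ) : Fin N := ⟨(x.1 + d) % N, Nat.mod_lt _ x.pos⟩

/-- The clockwise gap at node `x` with respect to the active set `A`:
the distance from `x` to the next active node clockwise. -/
def gapLen {N : ℕ} (A : Finset (Fin N)) (x : Fin N) : ℕ :=
  sInf {d : ℕ | 0 < d ∧ wrap x d ∈ A}

/-- The length of the largest gap of the active set `A`. -/
def maxGap {N : ℕ} (A : Finset (Fin N)) : ℕ := A.sup (gapLen A)

/-- The set of active nodes at which a gap of maximal length starts (clockwise). -/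
def maxSet {N : ℕ} (A : Finset (Fin N)) : Finset (Fin N) :=
  A.filter (fun x => gapLen A x = maxGap A)

/-- Clockwise hop distance from `a` to `b`. -/
def dCw {N : ℕ} (a b : Fin N) : ℕ := (b.1 + N - a.1) % N

/-- Probability (over the uniform tie-break among maximal gaps) that the chosen
largest gap of active set `A` starts (clockwise) at node `g`. -/
def clgStartProb {N : ℕ} (A : Finset (Fin N)) (g : Fin N) : ℚ :=
  if g ∈ maxSet A then 1 / ((maxSet A).card : ℚ) else 0

/-- Probability (over the uniform tie-break among maximal gaps) that the clockwise
segment entering node `m` is traversed under shortest-path routing, when the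
active set is `A` and the sender is `S`: the clockwise copy travels from `S` to the
start of the chosen largest gap. -/
def segUseProb {N : ℕ} (A : Finset (Fin N)) (S m : Fin N) : ℚ :=
  (((maxSet A).filter (fun g => 1 ≤ dCw S m ∧ dCw S m ≤ dCw S g)).card : ℚ) /
    ((maxSet A).card : ℚ)

/-- The nodes of an `N`-node ring homed on wavelength `lam` (out of `Λ` wavelengths):
those whose index is congruent to `lam` modulo `Λ`. -/
def homed (N Λ lam : ℕ) : Finset (Fin N) :=
  Finset.univ.filter (fun i => i.1 % Λ = lam % Λ)

end

noncomputable section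
/-- Distribution of the largest gap: probability that the largest gap determined by a
uniformly random `(l+1)`-subset of an `N`-node ring has length `k`. -/
def qDist (l N k : ℕ) : ℚ :=
  ((((Finset.univ : Finset (Fin N)).powersetCard (l + 1)).filter
      (fun A => maxGap A = k)).card : ℚ) / (N.choose (l + 1) : ℚ)

/-- The probability that an arbitrary (fixed) gap has `k` hops. -/
def pGap (l N k : ℕ) : ℚ := ((N - k - 1).choose (l - 1) : ℚ) / ((N - 1).choose l : ℚ)


section Aux
open Finset

variable {N : ℕ}

lemma wrap_val (x : Fin N) (d : ℕ) : (wrap x d).1 = (x.1 + d) % N := rfl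

lemma wrap_wrap (x : Fin N) (d e : ℕ) : wrap (wrap x d) e = wrap x (d + e) := by
  apply Fin.ext
  simp [wrap, Nat.mod_add_mod, Nat.add_assoc]

lemma wrap_self (x : Fin N) : wrap x N = x := by
  apply Fin.ext
  simp [wrap, Nat.add_mod_right, Nat.mod_eq_of_lt x.isLt]

open Fin.NatCast in
lemma wrap_eq_add (x : Fin N) (d : ℕ) :
    haveI : NeZero N := ⟨x.pos.ne'⟩
    wrap x d = x + (d : Fin N) := by
  haveI : NeZero N := ⟨x.pos.ne'⟩
  apply Fin.ext
  simp [wrap, Fin.add_def, Fin.val_natCast, Nat.add_mod_mod]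

end Aux

section Gap
open Finset
variable {N : ℕ} (A : Finset (Fin N))

lemma gapSet_nonempty {x : Fin N} (hx : x ∈ A) :
    {d : ℕ | 0 < d ∧ wrap x d ∈ A}.Nonempty :=
  ⟨N, x.pos, by rwa [wrap_self]⟩

lemma gapLen_pos {x : Fin N} (hx : x ∈ A) : 0 < gapLen A x :=
  (Nat.sInf_mem (gapSet_nonempty A hx)).1

lemma wrap_gapLen_mem {x : Fin N} (hx : x ∈ A) : wrap x (gapLen A x) ∈ A :=
  (Nat.sInf_mem (gapSet_nonempty A hx)).2

lemma gapLen_le {x : Fin N} {d : ℕ} (hd : 0 < d) (h : wrap x d ∈ A) :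
    gapLen A x ≤ d := Nat.sInf_le ⟨hd, h⟩

lemma not_mem_of_lt_gapLen {x : Fin N} {e : ℕ} (he : 0 < e) (h : e < gapLen A x) :
    wrap x e ∉ A := fun hmem => (Nat.notMem_of_lt_sInf h) ⟨he, hmem⟩

lemma gapLen_eq {x : Fin N} {d : ℕ} (hd : 0 < d) (hmem : wrap x d ∈ A)
    (hmin : ∀ e, 0 < e → e < d → wrap x e ∉ A) : gapLen A x = d := by
  refine le_antisymm (Nat.sInf_le ⟨hd, hmem⟩) ?_
  by_contra h
  push_neg at h
  have hm := Nat.sInf_mem (⟨d, hd, hmem⟩ : Set.Nonempty {e : ℕ | 0 < e ∧ wrap x e ∈ A})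
  exact hmin _ hm.1 h hm.2

end Gap

section Rot
open Finset
variable {N : ℕ} [NeZero N]

lemma gapLen_map (c : Fin N) (A : Finset (Fin N)) (x : Fin N) :
    gapLen (A.map (Equiv.addRight c).toEmbedding) (x + c) = gapLen A x := by
  unfold gapLen
  congr 1
  ext d
  have h1 : wrap (x + c) d = wrap x d + c := by
    rw [wrap_eq_add, wrap_eq_add]
    abel
  simp [h1, Finset.mem_map_equiv]

lemma maxGap_map (c : Fin N) (A : Finset (Fin N)) :
    maxGap (A.map (Equiv.addRight c).toEmbedding) = maxGap A := by
  unfold maxGap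
  rw [Finset.sup_map]
  exact Finset.sup_congr rfl (fun x _ => gapLen_map c A x)

end Rot

noncomputable section Cnt
open Finset

def cnt (s N k : ℕ) : ℕ :=
  (((Finset.univ : Finset (Fin N)).powersetCard s).filter (fun A => maxGap A = k)).card

def cnt0 (s N k : ℕ) : ℕ :=
  (((Finset.univ : Finset (Fin N)).powersetCard s).filter
    (fun A => maxGap A = k ∧ ∃ x ∈ A, x.1 = 0)).card

lemma rot_slice (N s k : ℕ) [NeZero N] (x : Fin N) :
    ((((Finset.univ : Finset (Fin N)).powersetCard s).filter
      (fun A => maxGap A = k ∧ x ∈ A)).card) = cnt0 s N k := by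
  apply Finset.card_bij' (fun A _ => A.map (Equiv.addRight (-x)).toEmbedding)
    (fun B _ => B.map (Equiv.addRight x).toEmbedding)
  · intro A _
    ext y
    simp [Finset.mem_map_equiv]
  · intro B _
    ext y
    simp [Finset.mem_map_equiv]
  · intro A hA
    simp only [Finset.mem_filter, Finset.mem_powersetCard_univ] at hA ⊢
    obtain ⟨hcard, hmax, hxA⟩ := hA
    refine ⟨by simp [hcard], by rw [maxGap_map]; exact hmax, ⟨x + (-x), ?_, by simp⟩⟩
    simp [Finset.mem_map_equiv, hxA]
  · intro B hB
    simp only [Finset.mem_filter, Finset.mem_powersetCard_univ] at hB ⊢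
    obtain ⟨hcard, hmax, y, hyB, hy0⟩ := hB
    have hy : y = 0 := Fin.ext hy0
    subst hy
    refine ⟨by simp [hcard], by rw [maxGap_map]; exact hmax, ?_⟩
    have : (0 : Fin N) + x = x := by abel
    rw [← this]
    simp [Finset.mem_map_equiv, hyB]

end Cnt

section RotCount
open Finset

lemma cnt_zero_ring (s k : ℕ) (hs : 1 ≤ s) : cnt s 0 k = 0 := by
  unfold cnt
  have : (Finset.univ : Finset (Fin 0)) = ∅ := rfl
  rw [this, Finset.powersetCard_eq_empty.2 (by simp; omega)]
  simp

lemma cnt0_zero_ring (s k : ℕ) (hs : 1 ≤ s) : cnt0 s 0 k = 0 := by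
  unfold cnt0
  have : (Finset.univ : Finset (Fin 0)) = ∅ := rfl
  rw [this, Finset.powersetCard_eq_empty.2 (by simp; omega)]
  simp

lemma rot_count (s N k : ℕ) (hs : 1 ≤ s) : s * cnt s N k = N * cnt0 s N k := by
  rcases Nat.eq_zero_or_pos N with rfl | hN
  · rw [cnt_zero_ring s k hs, cnt0_zero_ring s k hs]; ring
  haveI : NeZero N := ⟨hN.ne'⟩
  set S := (((Finset.univ : Finset (Fin N)).powersetCard s).filter
      (fun A => maxGap A = k)) with hS
  have h1 : s * cnt s N k = ∑ A ∈ S, A.card := by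
    rw [Finset.sum_congr rfl (fun A hA => ?_), Finset.sum_const, smul_eq_mul, mul_comm]
    · rfl
    · rw [hS, Finset.mem_filter, Finset.mem_powersetCard_univ] at hA
      exact hA.1
  have h2 : ∀ A : Finset (Fin N), A.card = ∑ x : Fin N, if x ∈ A then 1 else 0 := by
    intro A
    rw [← Finset.card_filter, Finset.filter_univ_mem]
  rw [h1, Finset.sum_congr rfl (fun A _ => h2 A), Finset.sum_comm]
  have h3 : ∀ x : Fin N, (∑ A ∈ S, if x ∈ A then 1 else 0) = cnt0 s N k := by
    intro x
    rw [← Finset.card_filter, hS, Finset.filter_filter]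
    exact rot_slice N s k x
  rw [Finset.sum_congr rfl (fun x _ => h3 x), Finset.sum_const, smul_eq_mul,
    Finset.card_univ, Fintype.card_fin]

end RotCount

section Base
open Finset

lemma maxGap_singleton {N : ℕ} (x : Fin N) : maxGap ({x} : Finset (Fin N)) = N := by
  have hg : gapLen ({x} : Finset (Fin N)) x = N := by
    apply gapLen_eq _ x.pos
    · rw [wrap_self]; exact Finset.mem_singleton_self x
    · intro e he hlt hmem
      rw [Finset.mem_singleton] at hmem
      have hv : (x.1 + e) % N = x.1 := congrArg Fin.val hmem
      have hm : x.1 % N = (x.1 + e) % N := by rw [Nat.mod_eq_of_lt x.isLt]; exact hv.symm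
      have := (Nat.modEq_iff_dvd' (Nat.le_add_right x.1 e)).1 hm
      simp only [Nat.add_sub_cancel_left] at this
      have := Nat.le_of_dvd he this
      omega
  unfold maxGap
  rw [Finset.sup_singleton, hg]

lemma maxGap_univ {N : ℕ} (hN : 1 ≤ N) : maxGap (Finset.univ : Finset (Fin N)) = 1 := by
  haveI : NeZero N := ⟨by omega⟩
  have hg : ∀ x : Fin N, gapLen (Finset.univ : Finset (Fin N)) x = 1 := by
    intro x
    apply gapLen_eq _ one_pos (Finset.mem_univ _)
    intro e he hlt
    omega
  unfold maxGap
  rw [Finset.sup_congr rfl (fun x _ => hg x)]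
  rw [Finset.sup_const ⟨0, Finset.mem_univ _⟩]

lemma qDist_zero (N : ℕ) (hN : 1 ≤ N) (k : ℕ) :
    qDist 0 N k = if k = N then 1 else 0 := by
  unfold qDist
  have hsing : ∀ A ∈ (Finset.univ : Finset (Fin N)).powersetCard 1, maxGap A = N := by
    intro A hA
    rw [Finset.mem_powersetCard_univ] at hA
    obtain ⟨x, rfl⟩ := Finset.card_eq_one.1 hA
    exact maxGap_singleton x
  rcases eq_or_ne k N with rfl | hk
  · rw [Finset.filter_true_of_mem (fun A hA => hsing A hA)]
    rw [Finset.card_powersetCard, Finset.card_univ, Fintype.card_fin]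
    rw [if_pos rfl]
    rw [div_self]
    simp [Nat.choose_one_right]
    omega
  · rw [Finset.filter_false_of_mem (fun A hA => by rw [hsing A hA]; exact fun h => hk h.symm)]
    simp [hk]

lemma qDist_top (N : ℕ) (hN : 1 ≤ N) (k : ℕ) :
    qDist (N - 1) N k = if k = 1 then 1 else 0 := by
  unfold qDist
  have hNN : N - 1 + 1 = N := by omega
  rw [hNN]
  have huniv : (Finset.univ : Finset (Fin N)).powersetCard N = {Finset.univ} := by
    ext A
    rw [Finset.mem_powersetCard_univ, Finset.mem_singleton]
    constructor
    · intro h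
      apply Finset.eq_univ_of_card
      rw [h, Fintype.card_fin]
    · rintro rfl
      rw [Finset.card_univ, Fintype.card_fin]
  rw [huniv]
  rcases eq_or_ne k 1 with rfl | hk
  · rw [Finset.filter_true_of_mem (fun A hA => by
      rw [Finset.mem_singleton] at hA; rw [hA]; exact maxGap_univ hN)]
    simp [Nat.choose_self]
  · rw [Finset.filter_false_of_mem (fun A hA => by
      rw [Finset.mem_singleton] at hA; rw [hA, maxGap_univ hN]; exact fun h => hk h.symm)]
    simp [hk]

end Base

noncomputable section Contract
open Finset

variable {N : ℕ} (m : ℕ)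

def phi (hm : m < N) (b : Fin (N - m)) : Fin N :=
  ⟨b.1 + m, by have := b.isLt; omega⟩

def psi (hm : m < N) (a : Fin N) : Fin (N - m) :=
  ⟨a.1 - m, by have := a.isLt; omega⟩

/-- the zero node of the contracted ring -/
def zM (hm : m < N) : Fin (N - m) := ⟨0, Nat.sub_pos_of_lt hm⟩

def Fmap [NeZero N] (hm : m < N) (B : Finset (Fin (N - m))) : Finset (Fin N) :=
  insert 0 (B.image (phi m hm))

def Gmap [NeZero N] (hm : m < N) (A : Finset (Fin N)) : Finset (Fin (N - m)) :=
  (A.erase 0).image (psi m hm)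

variable [NeZero N]

lemma mem_Fmap (hm1 : 1 ≤ m) (hm : m < N) (B : Finset (Fin (N - m))) (y : Fin N) :
    y ∈ Fmap m hm B ↔ y.1 = 0 ∨ ∃ b ∈ B, y.1 = b.1 + m := by
  unfold Fmap phi
  simp only [Finset.mem_insert, Finset.mem_image, Fin.ext_iff, Fin.val_zero]
  constructor
  · rintro (h | ⟨b, hb, h⟩)
    · exact Or.inl h
    · exact Or.inr ⟨b, hb, h.symm⟩
  · rintro (h | ⟨b, hb, h⟩)
    · exact Or.inl h
    · exact Or.inr ⟨b, hb, h.symm⟩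

lemma zero_not_mem_image_phi (hm1 : 1 ≤ m) (hm : m < N) (B : Finset (Fin (N - m))) :
    (0 : Fin N) ∉ B.image (phi m hm) := by
  simp only [Finset.mem_image, phi, Fin.ext_iff, Fin.val_zero]
  rintro ⟨b, hb, h⟩
  omega

lemma phi_injective (hm : m < N) : Function.Injective (phi m hm) := by
  intro a b h
  have := congrArg Fin.val h
  simp only [phi] at this
  exact Fin.ext (by omega)

lemma card_Fmap (hm1 : 1 ≤ m) (hm : m < N) (B : Finset (Fin (N - m))) :
    (Fmap m hm B).card = B.card + 1 := by
  unfold Fmap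
  rw [Finset.card_insert_of_notMem (zero_not_mem_image_phi m hm1 hm B),
    Finset.card_image_of_injective _ (phi_injective m hm)]

lemma gapLen_Fmap_zero (hm1 : 1 ≤ m) (hm : m < N)
    (B : Finset (Fin (N - m))) (h0 : zM m hm ∈ B) :
    gapLen (Fmap m hm B) 0 = m := by
  apply gapLen_eq _ hm1
  · rw [mem_Fmap m hm1 hm]
    right
    refine ⟨zM m hm, h0, ?_⟩
    show ((0 : Fin N).1 + m) % N = (zM m hm).1 + m
    rw [Fin.val_zero, Nat.zero_add, Nat.mod_eq_of_lt hm]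
    simp [zM]
  · intro e he hlt hmem
    rw [mem_Fmap m hm1 hm] at hmem
    have hval : (wrap (0 : Fin N) e).1 = e := by
      show ((0 : Fin N).1 + e) % N = e
      rw [Fin.val_zero, Nat.zero_add, Nat.mod_eq_of_lt (by omega)]
    rcases hmem with h | ⟨b, _, h⟩ <;> omega


lemma gapLen_Fmap_phi (hm1 : 1 ≤ m) (hm : m < N) (B : Finset (Fin (N - m)))
    (h0 : zM m hm ∈ B) {b : Fin (N - m)} (hb : b ∈ B) :
    gapLen (Fmap m hm B) (phi m hm b) = gapLen B b := by
  set d := gapLen B b with hd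
  have hdpos : 0 < d := gapLen_pos B hb
  have hdmem : wrap b d ∈ B := wrap_gapLen_mem B hb
  have hbl : b.1 < (N - m) := b.isLt
  have hphival : (phi m hm b).1 = b.1 + m := rfl
  have hdle : b.1 + d ≤ (N - m) := by
    have hz : wrap b ((N - m) - b.1) = zM m hm := by
      apply Fin.ext
      show (b.1 + ((N - m) - b.1)) % (N - m) = (zM m hm).1
      rw [Nat.add_sub_cancel' (le_of_lt hbl), Nat.mod_self]
      rfl
    have := gapLen_le B (show 0 < (N - m) - b.1 by omega) (by rw [hz]; exact h0)
    omega
  have hmin : ∀ e, 0 < e → e < d → wrap (phi m hm b) e ∉ Fmap m hm B := by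
    intro e he hed hmem
    have hlt : b.1 + m + e < N := by omega
    have hval : (wrap (phi m hm b) e).1 = b.1 + m + e := by
      show ((phi m hm b).1 + e) % N = b.1 + m + e
      rw [hphival, Nat.mod_eq_of_lt hlt]
    rw [mem_Fmap m hm1 hm] at hmem
    rcases hmem with h | ⟨b', hb', h⟩
    · omega
    · have hb'e : b'.1 = b.1 + e := by omega
      have hw : wrap b e = b' := by
        apply Fin.ext
        show (b.1 + e) % (N - m) = b'.1
        rw [Nat.mod_eq_of_lt (show b.1 + e < (N - m) by omega), hb'e]
      exact not_mem_of_lt_gapLen B he hed (by rw [hw]; exact hb')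
  by_cases hcase : b.1 + d < (N - m)
  · refine gapLen_eq _ hdpos ?_ hmin
    rw [mem_Fmap m hm1 hm]
    right
    refine ⟨wrap b d, hdmem, ?_⟩
    have h1 : (wrap b d).1 = b.1 + d := by
      show (b.1 + d) % (N - m) = b.1 + d
      exact Nat.mod_eq_of_lt hcase
    show ((phi m hm b).1 + d) % N = (wrap b d).1 + m
    rw [h1, hphival, Nat.mod_eq_of_lt (by omega)]
    omega
  · have hdM : b.1 + d = (N - m) := by omega
    refine gapLen_eq _ hdpos ?_ hmin
    rw [mem_Fmap m hm1 hm]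
    left
    show ((phi m hm b).1 + d) % N = 0
    rw [hphival]
    have : b.1 + m + d = N := by omega
    rw [show b.1 + m + d = N by omega, Nat.mod_self]

lemma maxGap_Fmap (hm1 : 1 ≤ m) (hm : m < N) (B : Finset (Fin (N - m)))
    (h0 : zM m hm ∈ B) :
    maxGap (Fmap m hm B) = max m (maxGap B) := by
  calc maxGap (Fmap m hm B)
      = (insert (0 : Fin N) (B.image (phi m hm))).sup (gapLen (Fmap m hm B)) := rfl
    _ = gapLen (Fmap m hm B) 0 ⊔ (B.image (phi m hm)).sup (gapLen (Fmap m hm B)) :=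
        Finset.sup_insert
    _ = m ⊔ B.sup (fun b => gapLen (Fmap m hm B) (phi m hm b)) := by
        rw [gapLen_Fmap_zero m hm1 hm B h0, Finset.sup_image]
        rfl
    _ = m ⊔ B.sup (gapLen B) := by
        congr 1
        exact Finset.sup_congr rfl (fun b hb => gapLen_Fmap_phi m hm1 hm B h0 hb)
    _ = max m (maxGap B) := rfl

lemma psi_phi (hm : m < N) (b : Fin (N - m)) : psi m hm (phi m hm b) = b := by
  apply Fin.ext
  show (phi m hm b).1 - m = b.1
  rw [show (phi m hm b).1 = b.1 + m from rfl]
  omega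

lemma phi_psi (hm : m < N) (a : Fin N) (ha : m ≤ a.1) : phi m hm (psi m hm a) = a := by
  apply Fin.ext
  show (psi m hm a).1 + m = a.1
  rw [show (psi m hm a).1 = a.1 - m from rfl]
  omega

lemma Gmap_Fmap (hm1 : 1 ≤ m) (hm : m < N) (B : Finset (Fin (N - m))) :
    Gmap m hm (Fmap m hm B) = B := by
  unfold Gmap Fmap
  rw [Finset.erase_insert (zero_not_mem_image_phi m hm1 hm B), Finset.image_image]
  have h : B.image (psi m hm ∘ phi m hm) = B.image id :=
    Finset.image_congr (fun b _ => psi_phi m hm b)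
  rw [h, Finset.image_id]

lemma val_ge_of_mem {A : Finset (Fin N)} {m : ℕ} (hm1 : 1 ≤ m) (hgap : gapLen A 0 = m)
    {a : Fin N} (ha : a ∈ A) (hane : a ≠ 0) : m ≤ a.1 := by
  by_contra h
  push_neg at h
  have hapos : 0 < a.1 := by
    rcases Nat.eq_zero_or_pos a.1 with h' | h'
    · exact absurd (Fin.ext (h'.trans (Fin.val_zero N).symm)) hane
    · exact h'
  have hw : wrap (0 : Fin N) a.1 = a := by
    apply Fin.ext
    show ((0 : Fin N).1 + a.1) % N = a.1
    rw [Fin.val_zero, Nat.zero_add, Nat.mod_eq_of_lt a.isLt]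
  have hnm := not_mem_of_lt_gapLen A (x := (0 : Fin N)) hapos (by rw [hgap]; omega)
  exact hnm (by rw [hw]; exact ha)

lemma Fmap_Gmap (hm1 : 1 ≤ m) (hm : m < N) (A : Finset (Fin N))
    (h0 : (0 : Fin N) ∈ A) (hgap : gapLen A 0 = m) :
    Fmap m hm (Gmap m hm A) = A := by
  unfold Gmap Fmap
  rw [Finset.image_image]
  have himg : (A.erase 0).image (phi m hm ∘ psi m hm) = A.erase 0 := by
    have h : (A.erase 0).image (phi m hm ∘ psi m hm) = (A.erase 0).image id := by
      apply Finset.image_congr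
      intro a ha
      rw [Finset.mem_coe, Finset.mem_erase] at ha
      exact phi_psi m hm a (val_ge_of_mem hm1 hgap ha.2 ha.1)
    rw [h, Finset.image_id]
  rw [himg, Finset.insert_erase h0]

lemma zM_mem_Gmap (hm1 : 1 ≤ m) (hm : m < N) (A : Finset (Fin N))
    (h0 : (0 : Fin N) ∈ A) (hgap : gapLen A 0 = m) :
    zM m hm ∈ Gmap m hm A := by
  unfold Gmap
  rw [Finset.mem_image]
  set a0 := wrap (0 : Fin N) m with ha0
  have ha0A : a0 ∈ A := by rw [ha0, ← hgap]; exact wrap_gapLen_mem A h0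
  have ha0v : a0.1 = m := by
    rw [ha0]
    show ((0 : Fin N).1 + m) % N = m
    rw [Fin.val_zero, Nat.zero_add, Nat.mod_eq_of_lt hm]
  refine ⟨a0, Finset.mem_erase.2 ⟨?_, ha0A⟩, ?_⟩
  · intro h
    rw [h, Fin.val_zero] at ha0v
    omega
  · apply Fin.ext
    show a0.1 - m = (zM m hm).1
    rw [ha0v, show (zM m hm).1 = 0 from rfl]
    omega

lemma card_Gmap (hm1 : 1 ≤ m) (hm : m < N) (A : Finset (Fin N))
    (h0 : (0 : Fin N) ∈ A) (hgap : gapLen A 0 = m) :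
    (Gmap m hm A).card = A.card - 1 := by
  unfold Gmap
  rw [Finset.card_image_of_injOn, Finset.card_erase_of_mem h0]
  intro a ha a' ha' he
  rw [Finset.mem_coe, Finset.mem_erase] at ha ha'
  have h1 := val_ge_of_mem hm1 hgap ha.2 ha.1
  have h2 := val_ge_of_mem hm1 hgap ha'.2 ha'.1
  have := congrArg Fin.val he
  rw [show (psi m hm a).1 = a.1 - m from rfl, show (psi m hm a').1 = a'.1 - m from rfl] at this
  exact Fin.ext (by omega)

lemma contract_card (l k : ℕ) (hm1 : 1 ≤ m) (hm : m < N) :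
    ((((Finset.univ : Finset (Fin N)).powersetCard (l + 1)).filter
      (fun A => (maxGap A = k ∧ ∃ x ∈ A, x.1 = 0) ∧ gapLen A 0 = m)).card)
    = ((((Finset.univ : Finset (Fin (N - m))).powersetCard l).filter
      (fun B => max m (maxGap B) = k ∧ ∃ x ∈ B, x.1 = 0)).card) := by
  apply Finset.card_nbij' (Gmap m hm) (Fmap m hm)
  · intro A hA
    rw [Finset.mem_coe, Finset.mem_filter, Finset.mem_powersetCard_univ] at hA ⊢
    obtain ⟨hcard, ⟨hmax, x, hxA, hx0⟩, hgap⟩ := hA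
    have h0A : (0 : Fin N) ∈ A := by
      rwa [show x = 0 from Fin.ext (hx0.trans (Fin.val_zero N).symm)] at hxA
    have hzG := zM_mem_Gmap m hm1 hm A h0A hgap
    refine ⟨by rw [card_Gmap m hm1 hm A h0A hgap, hcard]; omega, ?_, zM m hm, hzG, rfl⟩
    rw [← maxGap_Fmap m hm1 hm _ hzG, Fmap_Gmap m hm1 hm A h0A hgap]
    exact hmax
  · intro B hB
    rw [Finset.mem_coe, Finset.mem_filter, Finset.mem_powersetCard_univ] at hB ⊢
    obtain ⟨hcard, hmax, x, hxB, hx0⟩ := hB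
    have hzB : zM m hm ∈ B := by
      rwa [show x = zM m hm from Fin.ext (hx0.trans rfl)] at hxB
    refine ⟨by rw [card_Fmap m hm1 hm B, hcard], ⟨?_, 0, Finset.mem_insert_self _ _, Fin.val_zero N⟩,
      gapLen_Fmap_zero m hm1 hm B hzB⟩
    rw [maxGap_Fmap m hm1 hm B hzB]
    exact hmax
  · intro A hA
    rw [Finset.mem_coe, Finset.mem_filter] at hA
    obtain ⟨_, ⟨_, x, hxA, hx0⟩, hgap⟩ := hA
    have h0A : (0 : Fin N) ∈ A := by
      rwa [show x = 0 from Fin.ext (hx0.trans (Fin.val_zero N).symm)] at hxA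
    exact Fmap_Gmap m hm1 hm A h0A hgap
  · intro B _
    exact Gmap_Fmap m hm1 hm B

end Contract

section Decomp
open Finset

lemma maxGap_pos {M : ℕ} {B : Finset (Fin M)} (hB : B.Nonempty) : 1 ≤ maxGap B := by
  obtain ⟨b, hb⟩ := hB
  exact le_trans (gapLen_pos B hb) (Finset.le_sup hb)

lemma fiber_empty_of_ge {N : ℕ} [NeZero N] (l k m : ℕ) (hl : 1 ≤ l) (hm : N ≤ m) :
    ((((Finset.univ : Finset (Fin N)).powersetCard (l + 1)).filter
      (fun A => (maxGap A = k ∧ ∃ x ∈ A, x.1 = 0) ∧ gapLen A 0 = m)).card) = 0 := by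
  rw [Finset.card_eq_zero, Finset.filter_eq_empty_iff]
  intro A hA
  rw [Finset.mem_powersetCard_univ] at hA
  rintro ⟨⟨hmax, x, hxA, hx0⟩, hgap⟩
  have h0A : (0 : Fin N) ∈ A := by
    rwa [show x = 0 from Fin.ext (hx0.trans (Fin.val_zero N).symm)] at hxA
  obtain ⟨y, hyA, hy0⟩ := Finset.exists_mem_ne (by omega : 1 < A.card) 0
  have hypos : 0 < y.1 := by
    rcases Nat.eq_zero_or_pos y.1 with h' | h'
    · exact absurd (Fin.ext (h'.trans (Fin.val_zero N).symm)) hy0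
    · exact h'
  have hw : wrap (0 : Fin N) y.1 = y := by
    apply Fin.ext
    show ((0 : Fin N).1 + y.1) % N = y.1
    rw [Fin.val_zero, Nat.zero_add, Nat.mod_eq_of_lt y.isLt]
  have := gapLen_le A (x := (0 : Fin N)) hypos (by rw [hw]; exact hyA)
  have := y.isLt
  omega

lemma decomp (N l k : ℕ) [NeZero N] (hl : 1 ≤ l) (hk : 1 ≤ k) :
    cnt0 (l + 1) N k
      = (∑ j ∈ Finset.Icc 1 k, cnt0 l (N - k) j)
        + ∑ m ∈ Finset.Icc 1 (k - 1), cnt0 l (N - m) k := by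
  classical
  set S := (((Finset.univ : Finset (Fin N)).powersetCard (l + 1)).filter
      (fun A => maxGap A = k ∧ ∃ x ∈ A, x.1 = 0)) with hS
  have hfib : cnt0 (l + 1) N k = ∑ m ∈ Finset.Icc 1 k,
      (S.filter (fun A => gapLen A 0 = m)).card := by
    rw [show cnt0 (l + 1) N k = S.card from rfl]
    apply Finset.card_eq_sum_card_fiberwise (f := fun A => gapLen A 0)
    intro A hA
    rw [hS, Finset.mem_coe, Finset.mem_filter, Finset.mem_powersetCard_univ] at hA
    obtain ⟨hcard, hmax, x, hxA, hx0⟩ := hA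
    have h0A : (0 : Fin N) ∈ A := by
      rwa [show x = 0 from Fin.ext (hx0.trans (Fin.val_zero N).symm)] at hxA
    rw [Finset.mem_coe, Finset.mem_Icc]
    exact ⟨gapLen_pos A h0A, hmax ▸ Finset.le_sup h0A⟩
  -- each fiber as a filter over the powerset
  have hfilt : ∀ m, (S.filter (fun A => gapLen A 0 = m))
      = (((Finset.univ : Finset (Fin N)).powersetCard (l + 1)).filter
        (fun A => (maxGap A = k ∧ ∃ x ∈ A, x.1 = 0) ∧ gapLen A 0 = m)) := by
    intro m
    rw [hS, Finset.filter_filter]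
  -- value of each fiber for m < k
  have hsmall : ∀ m ∈ Finset.Icc 1 (k - 1),
      (S.filter (fun A => gapLen A 0 = m)).card = cnt0 l (N - m) k := by
    intro m hm
    rw [Finset.mem_Icc] at hm
    have hmk : m < k := by omega
    rw [hfilt m]
    by_cases hmN : m < N
    · rw [contract_card m l k hm.1 hmN]
      unfold cnt0
      congr 1
      apply Finset.filter_congr
      intro B _
      constructor
      · rintro ⟨hmax, hx⟩
        exact ⟨by omega, hx⟩
      · rintro ⟨hmax, hx⟩
        exact ⟨by omega, hx⟩
    · rw [fiber_empty_of_ge l k m hl (by omega)]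
      rw [show N - m = 0 by omega, cnt0_zero_ring l k hl]
  -- value of the top fiber
  have htop : (S.filter (fun A => gapLen A 0 = k)).card
      = ∑ j ∈ Finset.Icc 1 k, cnt0 l (N - k) j := by
    rw [hfilt k]
    by_cases hkN : k < N
    · rw [contract_card k l k hk hkN]
      set T := (((Finset.univ : Finset (Fin (N - k))).powersetCard l).filter
          (fun B => max k (maxGap B) = k ∧ ∃ x ∈ B, x.1 = 0)) with hT
      have hfib2 : T.card = ∑ j ∈ Finset.Icc 1 k,
          (T.filter (fun B => maxGap B = j)).card := by
        apply Finset.card_eq_sum_card_fiberwise (f := fun B => maxGap B)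
        intro B hB
        rw [hT, Finset.mem_coe, Finset.mem_filter, Finset.mem_powersetCard_univ] at hB
        obtain ⟨hcard, hmax, _⟩ := hB
        have hne : B.Nonempty := Finset.card_pos.1 (by omega)
        rw [Finset.mem_coe, Finset.mem_Icc]
        exact ⟨maxGap_pos hne, by beta_reduce; omega⟩
      rw [hfib2]
      apply Finset.sum_congr rfl
      intro j hj
      rw [Finset.mem_Icc] at hj
      rw [hT, Finset.filter_filter]
      unfold cnt0
      congr 1
      apply Finset.filter_congr
      intro B _
      constructor
      · rintro ⟨⟨_, hx⟩, hj'⟩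
        exact ⟨hj', hx⟩
      · rintro ⟨hj', hx⟩
        exact ⟨⟨by omega, hx⟩, hj'⟩
    · rw [fiber_empty_of_ge l k k hl (by omega)]
      rw [show N - k = 0 by omega]
      rw [Finset.sum_congr rfl (fun j _ => cnt0_zero_ring l j hl), Finset.sum_const,
        smul_eq_mul, Nat.mul_zero]
  -- combine
  rw [hfib, show k = (k - 1) + 1 by omega, Finset.sum_Icc_succ_top (by omega : 1 ≤ k - 1 + 1)]
  rw [show k - 1 + 1 = k by omega] at *
  rw [htop, Nat.add_comm]
  congr 1
  exact Finset.sum_congr rfl hsmall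

end Decomp

section Assemble
open Finset

lemma qDist_eq_cnt (l N k : ℕ) :
    qDist l N k = (cnt (l + 1) N k : ℚ) / (N.choose (l + 1) : ℚ) := rfl

lemma choose_id (M l : ℕ) (hl : 1 ≤ l) (hM : 1 ≤ M) :
    M * (M - 1).choose (l - 1) = M.choose l * l := by
  have h := Nat.add_one_mul_choose_eq (M - 1) (l - 1)
  rw [show M - 1 + 1 = M by omega, show l - 1 + 1 = l by omega] at h
  exact h

lemma cnt_eq_zero_of_lt (l M j : ℕ) (h : M < l) : cnt l M j = 0 := by
  unfold cnt
  rw [Finset.powersetCard_eq_empty.2 (by simp [Finset.card_univ]; omega)]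
  simp

lemma cnt0_eq_zero_of_lt (l M j : ℕ) (h : M < l) : cnt0 l M j = 0 := by
  unfold cnt0
  rw [Finset.powersetCard_eq_empty.2 (by simp [Finset.card_univ]; omega)]
  simp

lemma cnt0_cast (l M j : ℕ) (hl : 1 ≤ l) :
    (cnt0 l M j : ℚ) = ((M - 1).choose (l - 1) : ℚ) * qDist (l - 1) M j := by
  have hq : qDist (l - 1) M j = (cnt l M j : ℚ) / (M.choose l : ℚ) := by
    rw [qDist_eq_cnt, show l - 1 + 1 = l by omega]
  rcases lt_or_ge M l with h | h
  · rw [cnt0_eq_zero_of_lt l M j h, hq, cnt_eq_zero_of_lt l M j h]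
    simp
  · have hM : 1 ≤ M := by omega
    have h1 : (l : ℚ) * (cnt l M j : ℚ) = (M : ℚ) * (cnt0 l M j : ℚ) := by
      exact_mod_cast rot_count l M j hl
    have h2 : (M : ℚ) * ((M - 1).choose (l - 1) : ℚ) = (M.choose l : ℚ) * (l : ℚ) := by
      exact_mod_cast choose_id M l hl hM
    have hc : (M.choose l : ℚ) ≠ 0 := by
      exact_mod_cast (Nat.choose_pos h).ne'
    have hM0 : (M : ℚ) ≠ 0 := by positivity
    have key : (M : ℚ) * ((cnt0 l M j : ℚ) * (M.choose l : ℚ))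
        = (M : ℚ) * (((M - 1).choose (l - 1) : ℚ) * (cnt l M j : ℚ)) := by
      linear_combination (-((M.choose l : ℚ))) * h1 - (cnt l M j : ℚ) * h2
    have E := mul_left_cancel₀ hM0 key
    rw [hq, ← mul_div_assoc, eq_div_iff hc]
    exact E

lemma qDist_eq_cnt0 (l N k : ℕ) (hN : 1 ≤ N) (hlN : l + 1 ≤ N) :
    qDist l N k = (cnt0 (l + 1) N k : ℚ) / ((N - 1).choose l : ℚ) := by
  have h1 : ((l : ℚ) + 1) * (cnt (l + 1) N k : ℚ) = (N : ℚ) * (cnt0 (l + 1) N k : ℚ) := by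
    exact_mod_cast rot_count (l + 1) N k (by omega)
  have h2 : (N : ℚ) * ((N - 1).choose l : ℚ) = (N.choose (l + 1) : ℚ) * ((l : ℚ) + 1) := by
    have h := choose_id N (l + 1) (by omega) hN
    rw [show l + 1 - 1 = l by omega] at h
    exact_mod_cast h
  have hc : (N.choose (l + 1) : ℚ) ≠ 0 := by
    exact_mod_cast (Nat.choose_pos hlN).ne'
  have hc2 : ((N - 1).choose l : ℚ) ≠ 0 := by
    have hl2 : l ≤ N - 1 := by omega
    exact_mod_cast (Nat.choose_pos hl2).ne'
  have hN0 : (N : ℚ) ≠ 0 := by positivity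
  have key : (N : ℚ) * ((cnt (l + 1) N k : ℚ) * ((N - 1).choose l : ℚ))
      = (N : ℚ) * ((cnt0 (l + 1) N k : ℚ) * (N.choose (l + 1) : ℚ)) := by
    linear_combination (cnt (l + 1) N k : ℚ) * h2 + ((N.choose (l + 1) : ℚ)) * h1
  have E := mul_left_cancel₀ hN0 key
  rw [qDist_eq_cnt, div_eq_div_iff hc hc2]
  exact E

end Assemble

/-- Initialization and recursion for the distribution `qDist` of the
largest gap: `q_{0,N}(k) = [k = N]`, `q_{N-1,N}(k) = [k = 1]`, and for `1 ≤ l ≤ N-2`,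
`q_{l,N}(k) = p_{l,N}(k)·Σ_{m=1}^{k} q_{l-1,N-k}(m) + Σ_{m=1}^{k-1} p_{l,N}(m)·q_{l-1,N-m}(k)`. -/
theorem stmt1 (N : ℕ) (hN : 1 ≤ N) :
    (∀ k, qDist 0 N k = if k = N then 1 else 0) ∧
    (∀ k, qDist (N - 1) N k = if k = 1 then 1 else 0) ∧
    (∀ l k, 1 ≤ l → l ≤ N - 2 → 1 ≤ k →
      qDist l N k
        = pGap l N k * (∑ m ∈ Finset.Icc 1 k, qDist (l - 1) (N - k) m)
          + ∑ m ∈ Finset.Icc 1 (k - 1), pGap l N m * qDist (l - 1) (N - m) k) := by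
  refine ⟨qDist_zero N hN, qDist_top N hN, ?_⟩
  intro l k hl hlN hk
  haveI : NeZero N := ⟨by omega⟩
  have hN3 : 3 ≤ N := by omega
  have hlN' : l + 1 ≤ N := by omega
  rw [qDist_eq_cnt0 l N k hN hlN', decomp N l k hl hk]
  push_cast
  rw [add_div]
  congr 1
  · rw [Finset.sum_div, pGap, Finset.mul_sum]
    apply Finset.sum_congr rfl
    intro j _
    rw [cnt0_cast l (N - k) j hl]
    ring
  · rw [Finset.sum_div]
    apply Finset.sum_congr rfl
    intro m _
    rw [cnt0_cast l (N - m) k hl, pGap]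
    ring

end
end

section
/- The expected largest gap g(l,N) is monotone non-decreasing in the ring size: for fixed l with 0 ≤ l ≤ N-1, g(l,N) ≤ g(l,N+1). -/
noncomputable section
/-- `gExp l N` : expected length of the largest gap determined by a uniformly random
`(l+1)`-subset of an `N`-node ring. -/
def gExp (l N : ℕ) : ℚ :=
  (∑ A ∈ (Finset.univ : Finset (Fin N)).powersetCard (l + 1), (maxGap A : ℚ)) /
    (N.choose (l + 1) : ℚ)

def step {N : ℕ} (x y : Fin N) : ℕ := if x = y then N else (y.1 + N - x.1) % N

lemma mod_eval {N a b : ℕ} (ha : a < N) (hb : b < N) (hne : a ≠ b) :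
    (b + N - a) % N = if a < b then b - a else b + N - a := by
  split
  next h =>
    have : b + N - a = (b - a) + N := by omega
    rw [this, Nat.add_mod_right, Nat.mod_eq_of_lt (by omega)]
  next h => exact Nat.mod_eq_of_lt (by omega)

lemma step_pos {N : ℕ} (x y : Fin N) : 0 < step x y := by
  unfold step
  split
  next h => exact x.pos
  next h =>
    have hne : x.1 ≠ y.1 := fun hc => h (Fin.ext hc)
    rw [mod_eval x.isLt y.isLt hne]
    have := x.isLt; have := y.isLt
    split <;> omega

lemma wrap_step {N : ℕ} (x y : Fin N) : wrap x (step x y) = y := by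
  unfold wrap step
  apply Fin.ext
  simp only
  split
  next h =>
    subst h
    simp [Nat.add_mod_right, Nat.mod_eq_of_lt x.isLt]
  next h =>
    rw [Nat.add_mod_mod]
    have hx := x.isLt; have hy := y.isLt
    have : x.1 + (y.1 + N - x.1) = y.1 + N := by omega
    rw [this, Nat.add_mod_right, Nat.mod_eq_of_lt hy]

lemma step_min {N : ℕ} {x y : Fin N} {d : ℕ} (hd : 0 < d) (hw : wrap x d = y) :
    step x y ≤ d := by
  have hval : (x.1 + d) % N = y.1 := congrArg Fin.val hw
  unfold step
  split
  next h =>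
    subst h
    have hx : x.1 % N = x.1 := Nat.mod_eq_of_lt x.isLt
    have h2 : (x.1 + d) % N = x.1 % N := by rw [hval, hx]
    have h3 : N ∣ (x.1 + d) - x.1 := (Nat.modEq_iff_dvd' (Nat.le_add_right x.1 d)).mp h2.symm
    rw [Nat.add_sub_cancel_left] at h3
    exact Nat.le_of_dvd hd h3
  next h =>
    have : (y.1 + N - x.1) % N = d % N := by
      have h1 : (y.1 + (N - x.1)) % N = ((x.1 + d) % N + (N - x.1)) % N := by rw [hval]
      rw [Nat.mod_add_mod] at h1
      have e1 : y.1 + N - x.1 = y.1 + (N - x.1) := by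
        have := x.isLt; omega
      have e2 : x.1 + d + (N - x.1) = d + N := by have := x.isLt; omega
      rw [e1, h1, e2, Nat.add_mod_right]
    rw [this]
    exact Nat.mod_le d N

lemma gapLen_le_s4 {N : ℕ} {A : Finset (Fin N)} {y : Fin N} (hy : y ∈ A) (x : Fin N) :
    gapLen A x ≤ step x y :=
  Nat.sInf_le ⟨step_pos x y, by rw [wrap_step]; exact hy⟩

lemma gapLen_spec {N : ℕ} {A : Finset (Fin N)} (hA : A.Nonempty) (x : Fin N) :
    0 < gapLen A x ∧ wrap x (gapLen A x) ∈ A := by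
  obtain ⟨y, hy⟩ := hA
  have hne : ({d : ℕ | 0 < d ∧ wrap x d ∈ A}).Nonempty :=
    ⟨step x y, step_pos x y, by rw [wrap_step]; exact hy⟩
  exact Nat.sInf_mem hne

lemma val_succAbove {N : ℕ} (j : Fin (N + 1)) (x : Fin N) :
    (j.succAbove x).1 = if x.1 < j.1 then x.1 else x.1 + 1 := by
  rw [Fin.succAbove]
  split
  next h =>
    rw [Fin.lt_def] at h
    simp only [Fin.coe_castSucc] at h ⊢
    rw [if_pos h]
  next h =>
    rw [Fin.lt_def] at h
    simp only [Fin.coe_castSucc] at h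
    simp only [Fin.val_succ]
    rw [if_neg (by omega)]

lemma step_mono {N : ℕ} (j : Fin (N + 1)) (x y : Fin N) :
    step x y ≤ step (j.succAbove x) (j.succAbove y) := by
  rcases eq_or_ne x y with rfl | hne
  · simp [step, Nat.le_succ]
  · have hne' : j.succAbove x ≠ j.succAbove y :=
      fun hc => hne (Fin.succAbove_right_injective hc)
    unfold step
    rw [if_neg hne, if_neg hne',
        mod_eval x.isLt y.isLt (fun hc => hne (Fin.ext hc)),
        mod_eval (j.succAbove x).isLt (j.succAbove y).isLt (fun hc => hne' (Fin.ext hc))]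
    have hx := val_succAbove j x
    have hy := val_succAbove j y
    have := x.isLt; have := y.isLt; have := j.isLt
    split_ifs at hx hy ⊢ <;> omega

lemma gapLen_mono {N : ℕ} (j : Fin (N + 1)) {A : Finset (Fin N)} (hA : A.Nonempty) (x : Fin N) :
    gapLen A x ≤ gapLen (A.map (Fin.succAboveEmb j)) (j.succAbove x) := by
  set A' := A.map (Fin.succAboveEmb j) with hA'def
  have hA' : A'.Nonempty := hA.map
  obtain ⟨hpos, hmem⟩ := gapLen_spec hA' (j.succAbove x)
  obtain ⟨y, hy, hey⟩ := Finset.mem_map.mp hmem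
  rw [Fin.coe_succAboveEmb] at hey
  calc gapLen A x ≤ step x y := gapLen_le_s4 hy x
    _ ≤ step (j.succAbove x) (j.succAbove y) := step_mono j x y
    _ ≤ gapLen A' (j.succAbove x) := step_min hpos hey.symm

lemma maxGap_mono {N : ℕ} (j : Fin (N + 1)) (A : Finset (Fin N)) :
    maxGap A ≤ maxGap (A.map (Fin.succAboveEmb j)) := by
  rcases A.eq_empty_or_nonempty with rfl | hA
  · simp [maxGap]
  · apply Finset.sup_le
    intro x hx
    calc gapLen A x ≤ gapLen (A.map (Fin.succAboveEmb j)) (j.succAbove x) := gapLen_mono j hA x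
      _ ≤ maxGap (A.map (Fin.succAboveEmb j)) := by
          apply Finset.le_sup
          exact Finset.mem_map_of_mem _ hx

open Finset in
lemma sum_insertion {N k : ℕ} (F : Finset (Fin (N + 1)) → ℚ) :
    ∑ j : Fin (N + 1), ∑ A ∈ (Finset.univ : Finset (Fin N)).powersetCard k,
        F (A.map (Fin.succAboveEmb j))
      = ∑ B ∈ (Finset.univ : Finset (Fin (N + 1))).powersetCard k,
          ((N + 1 - k : ℕ) : ℚ) * F B := by
  have hstep : ∀ j : Fin (N + 1),
      ∑ A ∈ (Finset.univ : Finset (Fin N)).powersetCard k, F (A.map (Fin.succAboveEmb j))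
        = ∑ B ∈ ((Finset.univ : Finset (Fin (N + 1))).powersetCard k).filter
            (fun B => j ∉ B), F B := by
    intro j
    have h1 : ∑ A ∈ (Finset.univ : Finset (Fin N)).powersetCard k,
        F (A.map (Fin.succAboveEmb j))
        = ∑ B ∈ Finset.powersetCard k ((Finset.univ : Finset (Fin N)).map
            (Fin.succAboveEmb j)), F B := by
      rw [powersetCard_map, Finset.sum_map]
      apply Finset.sum_congr rfl
      intro A _
      rw [RelEmbedding.coe_toEmbedding, mapEmbedding_apply]
    rw [h1]
    congr 1
    ext B
    simp only [mem_powersetCard, mem_filter, subset_iff, mem_map, mem_univ, true_and,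
      Fin.coe_succAboveEmb]
    constructor
    · rintro ⟨hsub, hcard⟩
      refine ⟨⟨fun _ _ => trivial, hcard⟩, fun hjB => ?_⟩
      obtain ⟨y, hy⟩ := hsub hjB
      exact Fin.succAbove_ne j y hy
    · rintro ⟨⟨-, hcard⟩, hjB⟩
      refine ⟨fun x hx => ?_, hcard⟩
      exact Fin.exists_succAbove_eq (fun h : x = j => hjB (h ▸ hx))
  calc ∑ j : Fin (N + 1), ∑ A ∈ (Finset.univ : Finset (Fin N)).powersetCard k,
          F (A.map (Fin.succAboveEmb j))
      = ∑ j : Fin (N + 1), ∑ B ∈ (Finset.univ : Finset (Fin (N + 1))).powersetCard k,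
          if j ∉ B then F B else 0 := by
        refine Finset.sum_congr rfl fun j _ => ?_
        rw [hstep j, Finset.sum_filter]
    _ = ∑ B ∈ (Finset.univ : Finset (Fin (N + 1))).powersetCard k,
          ∑ j : Fin (N + 1), if j ∉ B then F B else 0 := Finset.sum_comm
    _ = ∑ B ∈ (Finset.univ : Finset (Fin (N + 1))).powersetCard k,
          ((N + 1 - k : ℕ) : ℚ) * F B := by
        refine Finset.sum_congr rfl fun B hB => ?_
        have hcard : B.card = k := (Finset.mem_powersetCard.mp hB).2
        rw [← Finset.sum_filter, Finset.sum_const, nsmul_eq_mul]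
        congr 2
        have : Finset.univ.filter (fun j => j ∉ B) = Bᶜ := by
          ext j; simp [Finset.mem_compl]
        rw [this, Finset.card_compl, hcard, Fintype.card_fin]

/-- The expected largest gap is monotone non-decreasing in the ring
size: for fixed `l` with `0 ≤ l ≤ N-1`, `g(l,N) ≤ g(l,N+1)`. -/
theorem stmt4 (N l : ℕ) (hN : 1 ≤ N) (hl : l ≤ N - 1) : gExp l N ≤ gExp l (N + 1) := by
  have hk : l + 1 ≤ N := by omega
  set SN : ℚ := ∑ A ∈ (Finset.univ : Finset (Fin N)).powersetCard (l + 1), (maxGap A : ℚ)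
    with hSN
  set SN' : ℚ := ∑ A ∈ (Finset.univ : Finset (Fin (N + 1))).powersetCard (l + 1),
      (maxGap A : ℚ) with hSN'
  have hC : (0 : ℚ) < (N.choose (l + 1) : ℚ) := by
    exact_mod_cast Nat.choose_pos hk
  have hC' : (0 : ℚ) < ((N + 1).choose (l + 1) : ℚ) := by
    exact_mod_cast Nat.choose_pos (by omega : l + 1 ≤ N + 1)
  rw [gExp, gExp, div_le_div_iff₀ hC hC']
  -- key inequality : (N+1) * SN ≤ (N - l) * SN'
  have key : ((N : ℚ) + 1) * SN ≤ ((N + 1 - (l + 1) : ℕ) : ℚ) * SN' := by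
    have h1 : ∑ _j : Fin (N + 1), SN
        ≤ ∑ j : Fin (N + 1), ∑ A ∈ (Finset.univ : Finset (Fin N)).powersetCard (l + 1),
            (maxGap (A.map (Fin.succAboveEmb j)) : ℚ) := by
      refine Finset.sum_le_sum fun j _ => ?_
      refine Finset.sum_le_sum fun A _ => ?_
      exact_mod_cast maxGap_mono j A
    rw [sum_insertion (fun B => (maxGap B : ℚ))] at h1
    rw [← Finset.mul_sum, ← hSN'] at h1
    rwa [Finset.sum_const, Finset.card_univ, Fintype.card_fin, nsmul_eq_mul,
      Nat.cast_add, Nat.cast_one] at h1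
  -- binomial identity
  have hid : (N + 1) * N.choose (l + 1) = (N + 1 - (l + 1)) * ((N + 1).choose (l + 1)) := by
    have h1 := Nat.add_one_mul_choose_eq N (l + 1)
    have h2 := Nat.choose_succ_right_eq (N + 1) (l + 1)
    rw [h1, h2, Nat.mul_comm]
  have hidQ : ((N : ℚ) + 1) * (N.choose (l + 1) : ℚ)
      = ((N + 1 - (l + 1) : ℕ) : ℚ) * (((N + 1).choose (l + 1)) : ℚ) := by
    exact_mod_cast congrArg (Nat.cast : ℕ → ℚ) hid
  -- conclude
  have h3 := mul_le_mul_of_nonneg_right key hC'.le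
  have hpos : (0 : ℚ) < (N : ℚ) + 1 := by positivity
  refine le_of_mul_le_mul_left ?_ hpos
  calc ((N : ℚ) + 1) * (SN * ((N + 1).choose (l + 1) : ℚ))
      = ((N : ℚ) + 1) * SN * ((N + 1).choose (l + 1) : ℚ) := by ring
    _ ≤ ((N + 1 - (l + 1) : ℕ) : ℚ) * SN' * ((N + 1).choose (l + 1) : ℚ) := h3
    _ = ((N : ℚ) + 1) * (SN' * (N.choose (l + 1) : ℚ)) := by
        linear_combination (-SN') * hidQ


end
end

section
/- In a WDM ring with shortest-path routing, for any wavelength λ and any node n with 0 ≤ n ≤ N-1, the probability that clockwise segment n+1 is used on wavelength λ satisfies P(segment (n+1) used on λ) = P(segment n used on λ) + P(S = n) - P(G_λ = n), where S is the sender and G_λ is the clockwise starting node of the chosen largest gap on wavelength λ. -/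
noncomputable section
lemma dCw_lt {N : ℕ} (S m : Fin N) : dCw S m < N := Nat.mod_lt _ S.pos

lemma wrap_dCw {N : ℕ} (S n : Fin N) : wrap S (dCw S n) = n := by
  have hS : S.1 ≤ N := le_of_lt S.2
  apply Fin.ext
  show (S.1 + (n.1 + N - S.1) % N) % N = n.1
  rw [Nat.add_mod_mod]
  have : S.1 + (n.1 + N - S.1) = n.1 + N := by omega
  rw [this, Nat.add_mod_right, Nat.mod_eq_of_lt n.2]

lemma dCw_wrap {N : ℕ} (S : Fin N) {k : ℕ} (hk : k < N) : dCw S (wrap S k) = k := by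
  have hS : S.1 ≤ N := le_of_lt S.2
  show ((S.1 + k) % N + N - S.1) % N = k
  have h1 : (S.1 + k) % N + N - S.1 = (S.1 + k) % N + (N - S.1) := by omega
  rw [h1, Nat.mod_add_mod]
  have : S.1 + k + (N - S.1) = k + N := by omega
  rw [this, Nat.add_mod_right, Nat.mod_eq_of_lt hk]

lemma dCw_eq_iff {N : ℕ} (S g : Fin N) {k : ℕ} (hk : k < N) :
    dCw S g = k ↔ g = wrap S k := by
  constructor
  · intro h; rw [← h, wrap_dCw]
  · intro h; rw [h, dCw_wrap S hk]

lemma dCw_succ {N : ℕ} (S n : Fin N) : dCw S (wrap n 1) = (dCw S n + 1) % N := by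
  have hS : S.1 ≤ N := le_of_lt S.2
  show ((n.1 + 1) % N + N - S.1) % N = ((n.1 + N - S.1) % N + 1) % N
  have h1 : (n.1 + 1) % N + N - S.1 = (n.1 + 1) % N + (N - S.1) := by omega
  rw [h1, Nat.mod_add_mod, Nat.mod_add_mod]
  congr 1
  omega

open Finset

-- split lemma
lemma split_card {N : ℕ} (M : Finset (Fin N)) (S : Fin N) (k : ℕ) :
    (M.filter (fun g => k ≤ dCw S g)).card
      = (M.filter (fun g => k + 1 ≤ dCw S g)).card
        + (M.filter (fun g => dCw S g = k)).card := by
  have heq : M.filter (fun g => k ≤ dCw S g)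
      = M.filter (fun g => k + 1 ≤ dCw S g) ∪ M.filter (fun g => dCw S g = k) := by
    rw [← Finset.filter_or]
    apply Finset.filter_congr
    intro g _
    omega
  rw [heq, Finset.card_union_of_disjoint]
  rw [Finset.disjoint_left]
  intro g h1 h2
  simp only [mem_filter] at h1 h2
  omega

lemma single_card {N : ℕ} (M : Finset (Fin N)) (S : Fin N) {k : ℕ} (hk : k < N) :
    (M.filter (fun g => dCw S g = k)).card = if wrap S k ∈ M then 1 else 0 := by
  have : M.filter (fun g => dCw S g = k) = M.filter (fun g => g = wrap S k) := by
    apply Finset.filter_congr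
    intro g _
    simp [dCw_eq_iff S g hk]
  rw [this, Finset.filter_eq']
  split <;> simp

lemma card_identity {N : ℕ} (A : Finset (Fin N)) (S : Fin N) (hS : S ∈ A) (n : Fin N) :
    ((maxSet A).filter (fun g => 1 ≤ dCw S (wrap n 1) ∧ dCw S (wrap n 1) ≤ dCw S g)).card
      + (if n ∈ maxSet A then 1 else 0)
    = ((maxSet A).filter (fun g => 1 ≤ dCw S n ∧ dCw S n ≤ dCw S g)).card
      + (if S = n then (maxSet A).card else 0) := by
  set M := maxSet A with hM
  have hN : 0 < N := S.pos
  set k := dCw S n with hkdef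
  have hk : k < N := dCw_lt S n
  have hn : n = wrap S k := (wrap_dCw S n).symm
  have hsucc : dCw S (wrap n 1) = (k + 1) % N := dCw_succ S n
  have hSn : S = n ↔ k = 0 := by
    constructor
    · intro h
      subst h
      rw [hkdef]
      show (S.1 + N - S.1) % N = 0
      have : S.1 + N - S.1 = N := by omega
      rw [this, Nat.mod_self]
    · intro h
      rw [hn, h]
      apply Fin.ext
      show S.1 = (S.1 + 0) % N
      rw [Nat.add_zero, Nat.mod_eq_of_lt S.2]
  rcases Nat.eq_zero_or_pos k with hk0 | hkpos
  · -- k = 0, S = n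
    have hSeq : S = n := hSn.mpr hk0
    rw [if_pos hSeq]
    have h2 : ((M.filter (fun g => 1 ≤ k ∧ k ≤ dCw S g)).card) = 0 := by
      rw [Finset.card_eq_zero, Finset.filter_eq_empty_iff]
      intro g _
      omega
    rw [h2]
    rcases Nat.lt_or_ge 1 N with hN2 | hN1
    · -- N ≥ 2
      have h1 : (k + 1) % N = 1 := by rw [hk0]; exact Nat.mod_eq_of_lt hN2
      rw [hsucc, h1]
      have hf0 : (M.filter (fun g => 0 ≤ dCw S g)).card = M.card := by
        rw [Finset.filter_true_of_mem]; intro g _; exact Nat.zero_le _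
      have := split_card M S 0
      rw [hf0, single_card M S hN] at this
      have hw0 : wrap S 0 = n := by rw [hSeq] at hn ⊢; rw [hk0] at hn; exact hn.symm
      rw [hw0] at this
      have heq : (M.filter fun g => 1 ≤ 1 ∧ 1 ≤ dCw S g).card
          = (M.filter fun g => 0 + 1 ≤ dCw S g).card := by
        congr 1
        apply Finset.filter_congr
        intro g _
        simp
      rw [heq]
      omega
    · -- N = 1
      have hN1' : N = 1 := by omega
      subst hN1'
      have hn1 : ∀ m : Fin 1, m = n := fun m => Subsingleton.elim m n
      have hMne : M.Nonempty := by
        obtain ⟨a, ha, hga⟩ := Finset.exists_mem_eq_sup A ⟨S, hS⟩ (gapLen A)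
        exact ⟨a, Finset.mem_filter.mpr ⟨ha, hga.symm⟩⟩
      obtain ⟨g, hg⟩ := hMne
      rw [hn1 g] at hg
      have hMeq : M = {n} := by
        apply Finset.eq_singleton_iff_nonempty_unique_mem.mpr
        exact ⟨⟨n, hg⟩, fun x _ => hn1 x⟩
      have hsucc0 : dCw S (wrap n 1) = 0 := by
        rw [hsucc, hk0]
      have h3 : ((M.filter (fun g => 1 ≤ dCw S (wrap n 1) ∧ dCw S (wrap n 1) ≤ dCw S g)).card) = 0 := by
        rw [Finset.card_eq_zero, Finset.filter_eq_empty_iff]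
        intro g _
        omega
      rw [h3, if_pos hg, hMeq]
      simp
  · -- k ≥ 1, S ≠ n
    have hne : ¬ (S = n) := by rw [hSn]; omega
    rw [if_neg hne]
    have hsplit := split_card M S k
    rw [single_card M S hk, ← hn] at hsplit
    have hcond : (M.filter fun g => 1 ≤ k ∧ k ≤ dCw S g).card
        = (M.filter fun g => k ≤ dCw S g).card := by
      congr 1
      apply Finset.filter_congr
      intro g _
      omega
    rw [hcond]
    rcases Nat.lt_or_ge (k+1) N with hlt | hge
    · -- k+1 < N
      have h1 : (k + 1) % N = k + 1 := Nat.mod_eq_of_lt hlt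
      rw [hsucc, h1]
      have hcond2 : (M.filter fun g => 1 ≤ k + 1 ∧ k + 1 ≤ dCw S g).card
          = (M.filter fun g => k + 1 ≤ dCw S g).card := by
        congr 1
        apply Finset.filter_congr
        intro g _
        omega
      rw [hcond2]
      omega
    · -- k+1 = N
      have hNk : k + 1 = N := by omega
      have h1 : (k + 1) % N = 0 := by rw [hNk, Nat.mod_self]
      have h3 : ((M.filter (fun g => 1 ≤ dCw S (wrap n 1) ∧ dCw S (wrap n 1) ≤ dCw S g)).card) = 0 := by
        rw [hsucc, h1, Finset.card_eq_zero, Finset.filter_eq_empty_iff]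
        intro g _
        omega
      have h4 : (M.filter (fun g => k + 1 ≤ dCw S g)).card = 0 := by
        rw [Finset.card_eq_zero, Finset.filter_eq_empty_iff]
        intro g _
        have := dCw_lt S g
        omega
      omega


lemma maxSet_nonempty {N : ℕ} (A : Finset (Fin N)) (S : Fin N) (hS : S ∈ A) :
    (maxSet A).Nonempty := by
  obtain ⟨a, ha, hga⟩ := Finset.exists_mem_eq_sup A ⟨S, hS⟩ (gapLen A)
  exact ⟨a, Finset.mem_filter.mpr ⟨ha, hga.symm⟩⟩

lemma key {N : ℕ} (A : Finset (Fin N)) (S : Fin N) (hS : S ∈ A) (n : Fin N) :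
    segUseProb A S (wrap n 1)
      = segUseProb A S n + (if S = n then 1 else 0) - clgStartProb A n := by
  have hc : ((maxSet A).card : ℚ) ≠ 0 := by
    rw [Nat.cast_ne_zero]
    exact Finset.card_ne_zero_of_mem (maxSet_nonempty A S hS).choose_spec
  have hcast : (((maxSet A).filter (fun g => 1 ≤ dCw S (wrap n 1) ∧ dCw S (wrap n 1) ≤ dCw S g)).card : ℚ)
        + (if n ∈ maxSet A then 1 else 0)
      = (((maxSet A).filter (fun g => 1 ≤ dCw S n ∧ dCw S n ≤ dCw S g)).card : ℚ)
        + (if S = n then ((maxSet A).card : ℚ) else 0) := by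
    have h := card_identity A S hS n
    exact_mod_cast congrArg (Nat.cast : ℕ → ℚ) h
  unfold segUseProb clgStartProb
  have e1 : (if n ∈ maxSet A then 1 / ((maxSet A).card : ℚ) else 0)
      = (if n ∈ maxSet A then (1:ℚ) else 0) / ((maxSet A).card : ℚ) := by
    split <;> simp
  have e2 : (if S = n then (1:ℚ) else 0)
      = (if S = n then ((maxSet A).card : ℚ) else 0) / ((maxSet A).card : ℚ) := by
    split
    · rw [div_self hc]
    · rw [zero_div]
  rw [e1, e2, ← add_div, ← sub_div]
  congr 1
  have : (if n ∈ maxSet A then (1:ℚ) else 0) = (if n ∈ maxSet A then ((1:ℕ):ℚ) else ((0:ℕ):ℚ)) := by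
    norm_num
  linarith [hcast]


/-- Recursion for segment utilization under shortest-path routing:
for any distribution `w` over (sender, fanout-set-on-the-wavelength) pairs and any
node `n`, `P(segment (n+1) used) = P(segment n used) + P(S = n) - P(G = n)`,
where `G` is the clockwise starting node of the chosen largest gap of the active set. -/
theorem stmt5 (N : ℕ) (w : Fin N × Finset (Fin N) → ℚ)
    (hw0 : ∀ x, 0 ≤ w x) (hw1 : ∑ x, w x = 1) (n : Fin N) :
    (∑ x, w x * segUseProb (insert x.1 x.2) x.1 (wrap n 1))
      = (∑ x, w x * segUseProb (insert x.1 x.2) x.1 n)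
        + (∑ x ∈ Finset.univ.filter (fun x : Fin N × Finset (Fin N) => x.1 = n), w x)
        - (∑ x, w x * clgStartProb (insert x.1 x.2) n) := by
  have hstep : (∑ x, w x * segUseProb (insert x.1 x.2) x.1 (wrap n 1))
      = ∑ x : Fin N × Finset (Fin N),
          (w x * segUseProb (insert x.1 x.2) x.1 n
            + (if x.1 = n then w x else 0)
            - w x * clgStartProb (insert x.1 x.2) n) := by
    apply Finset.sum_congr rfl
    intro x _
    rw [key (insert x.1 x.2) x.1 (Finset.mem_insert_self _ _) n]
    split <;> ring
  rw [hstep, Finset.sum_sub_distrib, Finset.sum_add_distrib, Finset.sum_filter]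

end
end

section
/- Consider a ring with η nodes homed on wavelength λ, sender node N ≡ 0 homed on λ (hotspot source setting), and a destination set F_λ of size ℓ chosen uniformly at random among ℓ-subsets of the other η-1 homed nodes. Then the probability that the chosen largest gap starts at node 0 equals 1/(ℓ+1); equivalently, the first critical segment (entering the first node homed on λ) is used with probability ℓ/(ℓ+1). -/
noncomputable section
namespace Stmt7Aux
open Finset
set_option linter.unusedSectionVars false

variable {N : ℕ} [NeZero N]

lemma wrap_add (x c : Fin N) (d : ℕ) : wrap (x + c) d = wrap x d + c := by
  ext
  simp only [wrap, Fin.add_def, Nat.mod_add_mod, Nat.add_mod_right]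
  congr 1
  omega

lemma add_mem_image_iff (A : Finset (Fin N)) (c x : Fin N) :
    x + c ∈ A.image (· + c) ↔ x ∈ A := by
  constructor
  · intro h
    obtain ⟨y, hy, hxy⟩ := Finset.mem_image.1 h
    have : y = x := add_left_injective c hxy
    rwa [this] at hy
  · exact fun h => Finset.mem_image_of_mem _ h

lemma gapLen_image (A : Finset (Fin N)) (c x : Fin N) :
    gapLen (A.image (· + c)) (x + c) = gapLen A x := by
  unfold gapLen
  congr 1
  ext d
  simp only [Set.mem_setOf_eq, wrap_add, add_mem_image_iff]

lemma maxGap_image (A : Finset (Fin N)) (c : Fin N) :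
    maxGap (A.image (· + c)) = maxGap A := by
  unfold maxGap
  rw [Finset.sup_image]
  exact Finset.sup_congr rfl (fun x _ => gapLen_image A c x)

lemma maxSet_image (A : Finset (Fin N)) (c : Fin N) :
    maxSet (A.image (· + c)) = (maxSet A).image (· + c) := by
  unfold maxSet
  rw [Finset.filter_image]
  congr 1
  ext x
  simp only [Finset.mem_filter, gapLen_image, maxGap_image]

lemma clg_image (A : Finset (Fin N)) (c g : Fin N) :
    clgStartProb (A.image (· + c)) (g + c) = clgStartProb A g := by
  unfold clgStartProb
  rw [maxSet_image, Finset.card_image_of_injective _ (add_left_injective c)]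
  by_cases h : g ∈ maxSet A
  · rw [if_pos ((add_mem_image_iff _ _ _).2 h), if_pos h]
  · rw [if_neg (fun hc => h ((add_mem_image_iff _ _ _).1 hc)), if_neg h]

lemma clg_not_mem {A : Finset (Fin N)} {g : Fin N} (h : g ∉ A) : clgStartProb A g = 0 := by
  unfold clgStartProb
  have hm : g ∉ maxSet A := fun hc => h (Finset.mem_filter.1 hc).1
  rw [if_neg hm]

lemma maxSet_nonempty {A : Finset (Fin N)} (hA : A.Nonempty) : (maxSet A).Nonempty := by
  obtain ⟨b, hb, hb2⟩ := Finset.exists_mem_eq_sup A hA (gapLen A)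
  exact ⟨b, Finset.mem_filter.2 ⟨hb, hb2.symm⟩⟩

lemma sum_clg (A : Finset (Fin N)) (hA : A.Nonempty) :
    ∑ g : Fin N, clgStartProb A g = 1 := by
  have hc : ((maxSet A).card : ℚ) ≠ 0 := by
    exact_mod_cast Finset.card_ne_zero_of_mem (maxSet_nonempty hA).choose_spec
  unfold clgStartProb
  rw [Finset.sum_ite_mem, Finset.univ_inter, Finset.sum_const, nsmul_eq_mul]
  field_simp

lemma sum_clg_shift (k : ℕ) (g : Fin N) :
    ∑ A ∈ Finset.powersetCard k (Finset.univ : Finset (Fin N)), clgStartProb A g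
      = ∑ A ∈ Finset.powersetCard k (Finset.univ : Finset (Fin N)), clgStartProb A 0 := by
  have hinj : ∀ c : Fin N, Function.Injective (· + c) := fun c => add_left_injective c
  have hmem : ∀ (c : Fin N) (A : Finset (Fin N)), A ∈ Finset.powersetCard k Finset.univ →
      A.image (· + c) ∈ Finset.powersetCard k (Finset.univ : Finset (Fin N)) := by
    intro c A hA
    rw [Finset.mem_powersetCard_univ] at hA ⊢
    rw [Finset.card_image_of_injective _ (hinj c), hA]
  have hinv : ∀ (c : Fin N) (A : Finset (Fin N)), (A.image (· + c)).image (· + (-c)) = A := by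
    intro c A
    rw [Finset.image_image]
    have : ((· + (-c)) ∘ (· + c)) = id := by
      funext x; simp
    rw [this, Finset.image_id]
  refine Finset.sum_nbij' (i := fun A => A.image (· + (-g))) (j := fun A => A.image (· + g))
    (fun A hA => hmem _ _ hA) (fun A hA => hmem _ _ hA) ?_ ?_ ?_
  · intro A _
    have := hinv (-g) A
    simpa using this
  · intro A _
    exact hinv g A
  · intro A _
    have := clg_image A (-g) g
    rw [add_neg_cancel] at this
    exact this.symm

lemma sum_over_all (k : ℕ) (hk : 0 < k) :
    ∑ A ∈ Finset.powersetCard k (Finset.univ : Finset (Fin N)), clgStartProb A (0 : Fin N)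
      = (N.choose k : ℚ) / N := by
  have hN : (N : ℚ) ≠ 0 := by
    exact_mod_cast (Nat.pos_of_ne_zero (NeZero.ne N)).ne'
  have key : (N : ℚ) * ∑ A ∈ Finset.powersetCard k (Finset.univ : Finset (Fin N)),
      clgStartProb A (0 : Fin N) = (N.choose k : ℚ) := by
    calc (N : ℚ) * ∑ A ∈ Finset.powersetCard k (Finset.univ : Finset (Fin N)),
          clgStartProb A (0 : Fin N)
        = ∑ g : Fin N, ∑ A ∈ Finset.powersetCard k (Finset.univ : Finset (Fin N)),
            clgStartProb A g := by
          rw [Finset.sum_congr rfl (fun g _ => sum_clg_shift k g), Finset.sum_const,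
            Finset.card_univ, Fintype.card_fin, nsmul_eq_mul]
      _ = ∑ A ∈ Finset.powersetCard k (Finset.univ : Finset (Fin N)),
            ∑ g : Fin N, clgStartProb A g := Finset.sum_comm
      _ = ∑ A ∈ Finset.powersetCard k (Finset.univ : Finset (Fin N)), (1 : ℚ) := by
          refine Finset.sum_congr rfl (fun A hA => sum_clg A ?_)
          rw [Finset.mem_powersetCard_univ] at hA
          exact Finset.card_pos.1 (hA ▸ hk)
      _ = (N.choose k : ℚ) := by
          rw [Finset.sum_const, Finset.card_powersetCard, Finset.card_univ, Fintype.card_fin,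
            nsmul_eq_mul, mul_one]
  field_simp
  linarith [key]

lemma seg_eq (hN : 2 ≤ N) (A : Finset (Fin N)) (hA : A.Nonempty) :
    segUseProb A 0 (wrap 0 1) = 1 - clgStartProb A 0 := by
  have hc : 0 < (maxSet A).card := Finset.card_pos.2 (maxSet_nonempty hA)
  have hcQ : ((maxSet A).card : ℚ) ≠ 0 := by exact_mod_cast hc.ne'
  have hm : dCw (0 : Fin N) (wrap 0 1) = 1 := by
    simp only [dCw, wrap, Fin.val_zero, Nat.zero_add, Nat.sub_zero]
    rw [Nat.mod_eq_of_lt (by omega : 1 < N), Nat.add_mod_right]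
    exact Nat.mod_eq_of_lt (by omega)
  have hg : ∀ g : Fin N, dCw (0 : Fin N) g = g.1 := by
    intro g
    simp only [dCw, Fin.val_zero, Nat.sub_zero, Nat.add_mod_right]
    exact Nat.mod_eq_of_lt g.2
  have hfilter : (maxSet A).filter
      (fun g => 1 ≤ dCw (0 : Fin N) (wrap 0 1) ∧ dCw (0 : Fin N) (wrap 0 1) ≤ dCw (0 : Fin N) g)
      = (maxSet A).erase 0 := by
    ext g
    simp only [Finset.mem_filter, Finset.mem_erase, hm, hg, le_refl, true_and]
    constructor
    · rintro ⟨h1, h2⟩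
      refine ⟨?_, h1⟩
      intro h
      rw [h] at h2
      simp at h2
    · rintro ⟨hne, h1⟩
      refine ⟨h1, ?_⟩
      have : g.1 ≠ 0 := by intro h; apply hne; exact Fin.ext (by rw [h, Fin.val_zero])
      omega
  unfold segUseProb
  rw [hfilter]
  by_cases h0 : (0 : Fin N) ∈ maxSet A
  · rw [Finset.card_erase_of_mem h0]
    unfold clgStartProb
    rw [if_pos h0, Nat.cast_sub hc]
    push_cast
    field_simp
  · rw [Finset.erase_eq_of_notMem h0]
    unfold clgStartProb
    rw [if_neg h0]
    field_simp
    simp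

end Stmt7Aux
end

noncomputable section
/-- On a ring of `η` nodes homed on the wavelength, with sender the
hotspot node `0` and the destination set a uniformly random `ℓ`-subset of the other
`η - 1` homed nodes, the chosen largest gap starts at node `0` with probability
`1/(ℓ+1)`; equivalently the first critical segment (entering node `1`) is used with
probability `ℓ/(ℓ+1)`. -/
theorem stmt7 (η ℓ : ℕ) (hη : 0 < η) (hℓ : ℓ ≤ η - 1) :
    (∑ F ∈ ((Finset.univ : Finset (Fin η)).erase ⟨0, hη⟩).powersetCard ℓ,
        clgStartProb (insert (⟨0, hη⟩ : Fin η) F) ⟨0, hη⟩) / ((η - 1).choose ℓ : ℚ)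
      = 1 / (ℓ + 1) ∧
    (∑ F ∈ ((Finset.univ : Finset (Fin η)).erase ⟨0, hη⟩).powersetCard ℓ,
        segUseProb (insert (⟨0, hη⟩ : Fin η) F) ⟨0, hη⟩ (wrap ⟨0, hη⟩ 1)) /
        ((η - 1).choose ℓ : ℚ)
      = (ℓ : ℚ) / (ℓ + 1) := by
  haveI : NeZero η := ⟨hη.ne'⟩
  have h0 : (⟨0, hη⟩ : Fin η) = 0 := by ext; simp
  rw [h0]
  classical
  have hC : 0 < (η - 1).choose ℓ := Nat.choose_pos hℓ
  have hCQ : (((η - 1).choose ℓ : ℕ) : ℚ) ≠ 0 := by exact_mod_cast hC.ne'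
  have hℓQ : ((ℓ : ℚ) + 1) ≠ 0 := by positivity
  have hηQ : (η : ℚ) ≠ 0 := by exact_mod_cast hη.ne'
  -- the key bijection
  have hbij : ∑ F ∈ ((Finset.univ : Finset (Fin η)).erase 0).powersetCard ℓ,
        clgStartProb (insert (0 : Fin η) F) 0
      = ∑ A ∈ Finset.powersetCard (ℓ + 1) (Finset.univ : Finset (Fin η)),
        clgStartProb A 0 := by
    have hre : ∑ A ∈ Finset.powersetCard (ℓ + 1) (Finset.univ : Finset (Fin η)),
          clgStartProb A 0
        = ∑ A ∈ (Finset.powersetCard (ℓ + 1) (Finset.univ : Finset (Fin η))).filter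
            (fun A => (0 : Fin η) ∈ A), clgStartProb A 0 := by
      refine (Finset.sum_filter_of_ne ?_).symm
      intro A _ hA0
      by_contra h
      exact hA0 (Stmt7Aux.clg_not_mem (by simpa using h))
    rw [hre]
    refine Finset.sum_nbij' (i := fun F => insert (0 : Fin η) F) (j := fun A => A.erase 0)
      ?_ ?_ ?_ ?_ ?_
    · intro F hF
      rw [Finset.mem_powersetCard] at hF
      have h0F : (0 : Fin η) ∉ F := fun h => (Finset.notMem_erase _ _) (hF.1 h)
      rw [Finset.mem_filter, Finset.mem_powersetCard]
      exact ⟨⟨Finset.subset_univ _, by rw [Finset.card_insert_of_notMem h0F, hF.2]⟩,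
        Finset.mem_insert_self _ _⟩
    · intro A hA
      rw [Finset.mem_filter, Finset.mem_powersetCard] at hA
      rw [Finset.mem_powersetCard]
      constructor
      · exact Finset.erase_subset_erase _ (Finset.subset_univ _)
      · rw [Finset.card_erase_of_mem hA.2, hA.1.2]
        omega
    · intro F hF
      rw [Finset.mem_powersetCard] at hF
      exact Finset.erase_insert (fun h => (Finset.notMem_erase _ _) (hF.1 h))
    · intro A hA
      rw [Finset.mem_filter] at hA
      exact Finset.insert_erase hA.2
    · intro F _; rfl
  have hT : ∑ F ∈ ((Finset.univ : Finset (Fin η)).erase 0).powersetCard ℓ,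
        clgStartProb (insert (0 : Fin η) F) 0 = (η.choose (ℓ + 1) : ℚ) / η := by
    rw [hbij]
    exact Stmt7Aux.sum_over_all (ℓ + 1) (Nat.succ_pos ℓ)
  have hnat : η * (η - 1).choose ℓ = η.choose (ℓ + 1) * (ℓ + 1) := by
    obtain ⟨m, rfl⟩ : ∃ m, η = m + 1 := ⟨η - 1, by omega⟩
    simpa using Nat.add_one_mul_choose_eq m ℓ
  have part1 : (∑ F ∈ ((Finset.univ : Finset (Fin η)).erase 0).powersetCard ℓ,
        clgStartProb (insert (0 : Fin η) F) 0) / ((η - 1).choose ℓ : ℚ)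
      = 1 / (ℓ + 1) := by
    rw [hT]
    rw [div_div, div_eq_div_iff (by positivity) (by positivity)]
    have hQ : (η : ℚ) * ((η - 1).choose ℓ : ℚ) = (η.choose (ℓ + 1) : ℚ) * ((ℓ : ℚ) + 1) := by
      exact_mod_cast hnat
    linarith [hQ]
  refine ⟨part1, ?_⟩
  by_cases h2 : 2 ≤ η
  · have hseg : ∀ F ∈ ((Finset.univ : Finset (Fin η)).erase 0).powersetCard ℓ,
        segUseProb (insert (0 : Fin η) F) 0 (wrap 0 1)
          = 1 - clgStartProb (insert (0 : Fin η) F) 0 :=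
      fun F _ => Stmt7Aux.seg_eq h2 _ (Finset.insert_nonempty _ _)
    rw [Finset.sum_congr rfl hseg, Finset.sum_sub_distrib, Finset.sum_const,
      Finset.card_powersetCard, Finset.card_erase_of_mem (Finset.mem_univ _),
      Finset.card_univ, Fintype.card_fin, nsmul_eq_mul, mul_one, sub_div]
    rw [part1, div_self hCQ]
    field_simp
    ring
  · have hη1 : η = 1 := by omega
    subst hη1
    have hℓ0 : ℓ = 0 := by omega
    subst hℓ0
    have : ∀ (S m : Fin 1) (A : Finset (Fin 1)), segUseProb A S m = 0 := by
      intro S m A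
      unfold segUseProb
      have : (maxSet A).filter (fun g => 1 ≤ dCw S m ∧ dCw S m ≤ dCw S g) = ∅ := by
        apply Finset.filter_false_of_mem
        intro g _
        simp [dCw, Nat.mod_one]
      rw [this]
      simp
    simp [this]

end
end

section
/- Under hotspot source traffic with shortest-path routing, the segment utilization probability q_γ^ℓ(segment n used on λ) = q_γ^ℓ(G_λ ≥ n) is monotone non-increasing in n for n ∈ {1,...,N}, and is constant between consecutive critical segments: q_γ^ℓ(segment n used on λ) = q_γ^ℓ(segment ⌈n⌉_λ used on λ) for all n ≤ (η-1)Λ + λ. -/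
noncomputable section
/-- Hotspot source traffic: utilization probability of the clockwise segment entering
node `n % N`, when the sender is the hotspot node `0` and the destination set is a
uniformly random `ℓ`-subset of the nodes homed on wavelength `lam` (other than `0`). -/
def hsSegProb (N Λ lam ℓ : ℕ) (hNpos : 0 < N) (n : ℕ) : ℚ :=
  (∑ F ∈ ((homed N Λ lam).erase ⟨0, hNpos⟩).powersetCard ℓ,
      segUseProb (insert (⟨0, hNpos⟩ : Fin N) F) ⟨0, hNpos⟩ ⟨n % N, Nat.mod_lt _ hNpos⟩) /
    (((((homed N Λ lam).erase ⟨0, hNpos⟩).powersetCard ℓ)).card : ℚ)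

/-- Hotspot source traffic: probability that the chosen largest gap starts at a node
with index `≥ n`. -/
def hsClgGeProb (N Λ lam ℓ : ℕ) (hNpos : 0 < N) (n : ℕ) : ℚ :=
  (∑ F ∈ ((homed N Λ lam).erase ⟨0, hNpos⟩).powersetCard ℓ,
      (((maxSet (insert (⟨0, hNpos⟩ : Fin N) F)).filter (fun g => n ≤ g.1)).card : ℚ) /
        ((maxSet (insert (⟨0, hNpos⟩ : Fin N) F)).card : ℚ)) /
    (((((homed N Λ lam).erase ⟨0, hNpos⟩).powersetCard ℓ)).card : ℚ)

/-- Offset from index `n` to the next index congruent to `lam` modulo `Λ`. -/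
def offToNat (Λ lam n : ℕ) : ℕ := (lam % Λ + Λ - n % Λ) % Λ

-- auxiliary lemmas

lemma dCw_zero {N : ℕ} (hN : 0 < N) (g : Fin N) : dCw ⟨0, hN⟩ g = g.1 := by
  simp [dCw, Nat.mod_eq_of_lt g.isLt]

lemma add_off_mod {Λ lam n : ℕ} (hΛ : 0 < Λ) : (n + offToNat Λ lam n) % Λ = lam % Λ := by
  have ha : n % Λ < Λ := Nat.mod_lt _ hΛ
  have hle : n % Λ ≤ n := Nat.mod_le n Λ
  have hd : Λ * (n / Λ) + n % Λ = n := Nat.div_add_mod n Λ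
  unfold offToNat
  rw [Nat.add_mod, Nat.mod_mod_of_dvd _ dvd_rfl, ← Nat.add_mod]
  have h1 : n + (lam % Λ + Λ - n % Λ) = Λ * (n / Λ) + (lam % Λ + Λ) := by omega
  rw [h1, Nat.mul_add_mod, Nat.add_mod_right, Nat.mod_mod_of_dvd _ dvd_rfl]

lemma next_homed {Λ lam n x : ℕ} (hΛ : 0 < Λ) (hx : x % Λ = lam % Λ) (hnx : n ≤ x) :
    n + offToNat Λ lam n ≤ x := by
  have hlt : offToNat Λ lam n < Λ := Nat.mod_lt _ hΛ
  have h1 : (n + offToNat Λ lam n) % Λ = x % Λ := by rw [hx]; exact add_off_mod hΛ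
  have hx' : x = n + (x - n) := by omega
  have h3 : n + offToNat Λ lam n ≡ n + (x - n) [MOD Λ] := by rw [← hx']; exact h1
  have h2 : offToNat Λ lam n ≡ x - n [MOD Λ] := Nat.ModEq.add_left_cancel' n h3
  have h4 : offToNat Λ lam n = (x - n) % Λ := by
    rw [← Nat.mod_eq_of_lt hlt]; exact h2
  have h5 : (x - n) % Λ ≤ x - n := Nat.mod_le _ _
  omega

/-- Under hotspot source traffic with shortest-path routing, the
segment utilization `q_γ^ℓ(segment n used) = q_γ^ℓ(G ≥ n)` is monotone non-increasing
in `n ∈ {1,…,N}` and is constant between consecutive critical segments: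
`q_γ^ℓ(segment n) = q_γ^ℓ(segment ⌈n⌉_lam)` for all `n ≤ (η-1)Λ + lam`. -/
theorem stmt13 (N Λ η lam ℓ : ℕ) (hN : N = η * Λ) (hNpos : 0 < N)
    (hlam1 : 1 ≤ lam) (hlamΛ : lam ≤ Λ) (hη : 0 < η) (hℓ : ℓ ≤ η - 1) :
    (∀ n, 1 ≤ n → n ≤ N →
      hsSegProb N Λ lam ℓ hNpos n = hsClgGeProb N Λ lam ℓ hNpos n) ∧
    (∀ n m, 1 ≤ n → n ≤ m → m ≤ N →
      hsSegProb N Λ lam ℓ hNpos m ≤ hsSegProb N Λ lam ℓ hNpos n) ∧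
    (∀ n, 1 ≤ n → n ≤ (η - 1) * Λ + lam →
      hsSegProb N Λ lam ℓ hNpos n = hsSegProb N Λ lam ℓ hNpos (n + offToNat Λ lam n)) := by
  have hΛ : 0 < Λ := lt_of_lt_of_le hlam1 hlamΛ
  have key : ∀ (n : ℕ), 1 ≤ n → n ≤ N → ∀ A : Finset (Fin N),
      segUseProb A ⟨0, hNpos⟩ ⟨n % N, Nat.mod_lt _ hNpos⟩ =
        (((maxSet A).filter (fun g => n ≤ g.1)).card : ℚ) / ((maxSet A).card : ℚ) := by
    intro n h1 h2 A
    unfold segUseProb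
    have hfil := Finset.filter_congr (s := maxSet A)
      (p := fun g => 1 ≤ dCw ⟨0, hNpos⟩ ⟨n % N, Nat.mod_lt _ hNpos⟩ ∧
        dCw ⟨0, hNpos⟩ ⟨n % N, Nat.mod_lt _ hNpos⟩ ≤ dCw ⟨0, hNpos⟩ g)
      (q := fun g => n ≤ g.1) ?_
    · rw [hfil]
    · intro g _
      simp only [dCw_zero hNpos]
      have hg := g.isLt
      rcases lt_or_eq_of_le h2 with h | h
      · rw [Nat.mod_eq_of_lt h]; omega
      · subst h; rw [Nat.mod_self]; omega
  refine ⟨?_, ?_, ?_⟩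
  · intro n h1 h2
    unfold hsSegProb hsClgGeProb
    congr 1
    exact Finset.sum_congr rfl fun F _ => key n h1 h2 _
  · intro n m h1 hnm hmN
    have hnN : n ≤ N := hnm.trans hmN
    unfold hsSegProb
    apply div_le_div_of_nonneg_right ?_ (Nat.cast_nonneg _)
    apply Finset.sum_le_sum
    intro F _
    rw [key n h1 hnN, key m (h1.trans hnm) hmN]
    apply div_le_div_of_nonneg_right ?_ (Nat.cast_nonneg _)
    exact_mod_cast Finset.card_le_card
      (Finset.monotone_filter_right _ (fun x _ hx => le_trans hnm hx))
  · intro n h1 h3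
    set k := offToNat Λ lam n with hk_def
    have hcrit_mod : ((η - 1) * Λ + lam) % Λ = lam % Λ := by
      rw [Nat.mul_comm, Nat.mul_add_mod]
    have hm_le : n + k ≤ (η - 1) * Λ + lam := next_homed hΛ hcrit_mod h3
    have hcritN : (η - 1) * Λ + lam ≤ N := by
      obtain ⟨t, rfl⟩ : ∃ t, η = t + 1 := ⟨η - 1, by omega⟩
      have e1 : t + 1 - 1 = t := rfl
      have e2 : (t + 1) * Λ = t * Λ + Λ := Nat.succ_mul t Λ
      rw [e1]
      omega
    have hnN : n ≤ N := h3.trans hcritN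
    have hmN : n + k ≤ N := hm_le.trans hcritN
    unfold hsSegProb
    congr 1
    apply Finset.sum_congr rfl
    intro F hF
    rw [key n h1 hnN, key (n + k) (by omega) hmN]
    have hfil := Finset.filter_congr (s := maxSet (insert (⟨0, hNpos⟩ : Fin N) F))
      (p := fun g => n ≤ g.1) (q := fun g => n + k ≤ g.1) ?_
    · rw [hfil]
    intro g hg
    have hgA : g ∈ insert (⟨0, hNpos⟩ : Fin N) F :=
      (Finset.mem_filter.mp hg).1
    rcases Finset.mem_insert.mp hgA with h0 | hgF
    · subst h0; simp only [Fin.val_mk]; omega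
    · have hFsub := (Finset.mem_powersetCard.mp hF).1
      have hgh : g ∈ homed N Λ lam := Finset.mem_of_mem_erase (hFsub hgF)
      have hgmod : g.1 % Λ = lam % Λ := by
        simpa [homed] using hgh
      constructor
      · intro hn; exact next_homed hΛ hgmod hn
      · intro hm; omega


end
end
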